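/- Let a, b, c, x, y be positive integers with x ≤ a, x ≤ b, x ≤ c, y ≤ a, y ≤ b, and y ≤ c. Then the words axbyc and aybxc (with letter sequences (a,x,b,y,c) and (a,y,b,x,c)) are strongly Wilf equivalent: for all n, m, j ∈ ℕ, the number of words w with |w| = n, ‖w‖ = m, and exactly j embeddings of axbyc equals the number of words w with |w| = n, ‖w‖ = m, and exactly j embeddings of aybxc. -/

import Mathlib

/-- The `n`-th letter (1-indexed) of a word `u`, with the convention that
letters outside the range `{1, …, |u|}` are `0`. -/
def letter (u : List ℕ) (n : ℤ) : ℕ :=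
  if 1 ≤ n then u.getD (n - 1).toNat 0 else 0

/-- A word over the positive integers: every letter is positive. -/
def IsWord (w : List ℕ) : Prop := ∀ x ∈ w, 0 < x

/-- `u` embeds in `w` at (1-indexed) position `i`:
`1 ≤ i ≤ |w| - |u| + 1` and `u_j ≤ w_{i+j-1}` for all `1 ≤ j ≤ |u|`. -/
def EmbedsAt (u w : List ℕ) (i : ℕ) : Prop :=
  1 ≤ i ∧ i + u.length ≤ w.length + 1 ∧
    ∀ j ∈ Finset.Icc 1 u.length, letter u (j : ℤ) ≤ letter w ((i : ℤ) + (j : ℤ) - 1)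

instance (u w : List ℕ) : DecidablePred (EmbedsAt u w) := fun i => by
  unfold EmbedsAt; infer_instance

/-- `η_u(w)`: the number of positions at which `u` embeds in `w`. -/
def eta (u w : List ℕ) : ℕ :=
  ((Finset.Icc 1 (w.length + 1 - u.length)).filter (EmbedsAt u w)).card

/-- Strong Wilf equivalence: for all `n m j`, the number of words of length `n`,
sum `m`, and exactly `j` embeddings of `u` equals that for `v`. -/
def StronglyWilfEquiv (u v : List ℕ) : Prop :=
  ∀ n m j : ℕ,
    {w : List ℕ | IsWord w ∧ w.length = n ∧ w.sum = m ∧ eta u w = j}.ncard =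
    {w : List ℕ | IsWord w ∧ w.length = n ∧ w.sum = m ∧ eta v w = j}.ncard

/-- `w` avoids `u`: there is no position at which `u` embeds in `w`. -/
def Avoids (u w : List ℕ) : Prop := ∀ i : ℕ, ¬ EmbedsAt u w i

/-- Wilf equivalence: for all `n m`, the number of words of length `n` and
sum `m` avoiding `u` equals that for `v`. -/
def WilfEquiv (u v : List ℕ) : Prop :=
  ∀ n m : ℕ,
    {w : List ℕ | IsWord w ∧ w.length = n ∧ w.sum = m ∧ Avoids u w}.ncard =
    {w : List ℕ | IsWord w ∧ w.length = n ∧ w.sum = m ∧ Avoids v w}.ncard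

/-- `v` is the rigid shift of `u` at height `h ≥ 1` by the integer `k`. -/
def IsRigidShift (u v : List ℕ) (h : ℕ) (k : ℤ) : Prop :=
  1 ≤ h ∧ v.length = u.length ∧
  (∀ n : ℤ, h < letter u n → 1 ≤ n + k ∧ n + k ≤ (u.length : ℤ) ∧ h ≤ letter u (n + k)) ∧
  (∀ n : ℤ, 1 ≤ n → n ≤ (v.length : ℤ) →
    letter v n = min h (letter u n) + (letter u (n - k) - h))

/-- Shift equivalence: the smallest equivalence relation relating every word to
its reversal and to each of its rigid shifts. -/
def ShiftEquiv (u v : List ℕ) : Prop :=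
  Relation.EqvGen (fun a b => b = a.reverse ∨ ∃ (h : ℕ) (k : ℤ), IsRigidShift a b h k) u v

/-!
If `u` is to embed in `w` at every position of a set `T`, then `w` must lie letterwise above
`demand u T`, the largest letter an occurrence in `T` places at each position (and at least `1`),
and conversely. Among words of given length and sum, the number lying above a
demand depends only on its total (subtract one demand, add the other), so the polynomial
`∑_w (1 + X)^{η_u(w)}`, which counts words with a set of marked occurrences, and hence the
distribution of `η_u`, depend only on the total demands of `u`.

The patterns `axbyc` and `cxbya` have equal total demand for every `T`: as `x, y` lie below
`a, b, c`, the two demands differ only at positions reached by the end letter of exactly one of two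
occurrences four apart, and in any finite `T ⊆ ℤ` the `i` with `i - 4 ∉ T` and `i - 2 ∈ T`
(resp. `∉ T`) are as many as the `i` with `i + 4 ∉ T` and `i + 2 ∈ T` (resp. `∉ T`). Reversing
words turns `cxbya` into `aybxc`.
-/

open Finset Polynomial

lemma letter_eq_zero (u : List ℕ) {q : ℤ} (hq : q < 1 ∨ (u.length : ℤ) < q) :
    letter u q = 0 := by
  unfold letter
  split_ifs
  · exact List.getD_eq_default _ _ (by omega)
  · rfl

lemma letter_natCast_add_one (u : List ℕ) (j : ℕ) (hj : j < u.length) :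
    letter u (j + 1) = u[j] := by
  simp [letter, hj]

lemma letter_reverse (u : List ℕ) (q : ℤ) :
    letter u.reverse q = letter u (u.length + 1 - q) := by
  by_cases hq : q < 1 ∨ (u.length : ℤ) < q
  · rw [letter_eq_zero _ (by simpa using hq), letter_eq_zero _ (by omega)]
  obtain ⟨j, rfl⟩ : ∃ j : ℕ, q = j + 1 := ⟨(q - 1).toNat, by omega⟩
  have hj : j < u.length := by omega
  rw [letter_natCast_add_one _ _ (by simpa using hj), List.getElem_reverse,
    show (u.length : ℤ) + 1 - (j + 1) = ((u.length - 1 - j : ℕ) : ℤ) + 1 by omega,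
    letter_natCast_add_one]

lemma one_le_letter {w : List ℕ} (hw : IsWord w) {p : ℤ} (h1 : 1 ≤ p) (h2 : p ≤ w.length) :
    1 ≤ letter w p := by
  obtain ⟨j, rfl⟩ : ∃ j : ℕ, p = j + 1 := ⟨(p - 1).toNat, by omega⟩
  rw [letter_natCast_add_one _ _ (by omega)]
  exact hw _ (List.getElem_mem _)

lemma letter_ofFn {n : ℕ} (f : Fin n → ℕ) (j : Fin n) : letter (List.ofFn f) (j + 1) = f j := by
  rw [letter_natCast_add_one _ _ (by simp), List.getElem_ofFn]

lemma sum_Icc_eq_sum_fin (n : ℕ) (g : ℤ → ℕ) :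
    ∑ p ∈ Icc (1 : ℤ) n, g p = ∑ j : Fin n, g (j + 1) := by
  rw [Fin.sum_univ_eq_sum_range (fun j => g (j + 1))]
  refine sum_nbij' (fun p => (p - 1).toNat) (fun j => j + 1) ?_ ?_ ?_ ?_ ?_ <;>
    intro p hp <;> simp only [mem_Icc, mem_range] at hp ⊢
  all_goals first | omega | congr 1; omega

lemma sum_letter (w : List ℕ) : ∑ p ∈ Icc (1 : ℤ) w.length, letter w p = w.sum := by
  conv_rhs => rw [← List.ofFn_getElem (xs := w)]
  rw [sum_Icc_eq_sum_fin, List.sum_ofFn]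
  exact sum_congr rfl fun j _ => letter_natCast_add_one _ _ j.2

lemma List.ext_letter {v w : List ℕ} (hl : v.length = w.length)
    (h : ∀ p ∈ Icc (1 : ℤ) w.length, letter v p = letter w p) : v = w := by
  refine List.ext_getElem hl fun j hv hw => ?_
  rw [← letter_natCast_add_one _ _ hv, ← letter_natCast_add_one _ _ hw]
  exact h _ (by simp; omega)

def words (n m : ℕ) : Finset (List ℕ) :=
  ((Nat.antidiagonalTuple n m).filter fun f => ∀ i, 0 < f i).map
    ⟨List.ofFn, List.ofFn_injective⟩

lemma mem_words {n m : ℕ} {w : List ℕ} :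
    w ∈ words n m ↔ IsWord w ∧ w.length = n ∧ w.sum = m := by
  constructor
  · intro hw
    obtain ⟨f, hf, rfl⟩ := mem_map.mp hw
    rw [mem_filter, Nat.mem_antidiagonalTuple] at hf
    refine ⟨?_, List.length_ofFn, by simp [List.sum_ofFn, hf.1]⟩
    intro x hx
    obtain ⟨i, rfl⟩ := List.mem_ofFn.mp hx
    exact hf.2 i
  · rintro ⟨hw, rfl, rfl⟩
    refine mem_map.mpr ⟨fun i => w[(i : ℕ)], ?_, List.ofFn_getElem⟩
    rw [mem_filter, Nat.mem_antidiagonalTuple, ← List.sum_ofFn, List.ofFn_getElem]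
    exact ⟨rfl, fun i => hw _ (List.getElem_mem _)⟩

lemma ncard_setOf_word_eq_card (n m : ℕ) (P : List ℕ → Prop) [DecidablePred P] :
    {w : List ℕ | IsWord w ∧ w.length = n ∧ w.sum = m ∧ P w}.ncard =
      #{w ∈ words n m | P w} := by
  rw [← Set.ncard_coe_finset]
  congr 1
  ext w
  simp [mem_words, and_assoc]

noncomputable def dominating (n m : ℕ) (d : ℤ → ℕ) : Finset (List ℕ) :=
  {w ∈ words n m | ∀ p ∈ Icc (1 : ℤ) n, d p ≤ letter w p}

lemma card_dominating_le {n m : ℕ} {d d' : ℤ → ℕ} (hd' : ∀ p ∈ Icc (1 : ℤ) n, 1 ≤ d' p)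
    (hsum : ∑ p ∈ Icc (1 : ℤ) n, d p = ∑ p ∈ Icc (1 : ℤ) n, d' p) :
    #(dominating n m d) ≤ #(dominating n m d') := by
  let move (w : List ℕ) : List ℕ :=
    List.ofFn fun j : Fin n => letter w (j + 1) - d (j + 1) + d' (j + 1)
  have letter_move (w : List ℕ) (p : ℤ) (hp : p ∈ Icc (1 : ℤ) n) :
      letter (move w) p = letter w p - d p + d' p := by
    obtain ⟨j, rfl⟩ : ∃ j : Fin n, p = j + 1 :=
      ⟨⟨(p - 1).toNat, by simp at hp; omega⟩, by simp at hp ⊢; omega⟩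
    exact letter_ofFn _ j
  refine card_le_card_of_injOn move (fun w hw => ?_) (fun v hv w hw hvw => ?_)
  · simp only [dominating, coe_filter, Set.mem_ofPred_eq, mem_words] at hw ⊢
    obtain ⟨⟨-, hlen, hsum_w⟩, hdom⟩ := hw
    have hmove : ∀ p ∈ Icc (1 : ℤ) n, d' p ≤ letter (move w) p := fun p hp => by
      rw [letter_move w p hp]; omega
    refine ⟨⟨fun x hx => ?_, List.length_ofFn, ?_⟩, hmove⟩
    · obtain ⟨j, rfl⟩ := List.mem_ofFn.mp hx
      have := hd' (j + 1) (by simp)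
      omega
    · have hd_le : ∑ p ∈ Icc (1 : ℤ) n, d p ≤ m := by
        rw [← hsum_w, ← sum_letter, hlen]; exact sum_le_sum hdom
      rw [← sum_letter, List.length_ofFn, sum_congr rfl (letter_move w), sum_add_distrib,
        sum_tsub_distrib _ hdom, ← hlen, sum_letter, hlen, hsum_w]
      omega
  · simp only [dominating, coe_filter, Set.mem_ofPred_eq, mem_words] at hv hw
    refine List.ext_letter (by rw [hv.1.2.1, hw.1.2.1]) fun p hp => ?_
    rw [hw.1.2.1] at hp
    have := congrArg (letter · p) hvw
    simp only [letter_move _ p hp] at this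
    have := hv.2 p hp
    have := hw.2 p hp
    omega

lemma card_dominating_congr {n m : ℕ} {d d' : ℤ → ℕ} (hd : ∀ p ∈ Icc (1 : ℤ) n, 1 ≤ d p)
    (hd' : ∀ p ∈ Icc (1 : ℤ) n, 1 ≤ d' p)
    (hsum : ∑ p ∈ Icc (1 : ℤ) n, d p = ∑ p ∈ Icc (1 : ℤ) n, d' p) :
    #(dominating n m d) = #(dominating n m d') :=
  (card_dominating_le hd' hsum).antisymm (card_dominating_le hd hsum.symm)

lemma embedsAt_iff {u w : List ℕ} {i : ℕ} :
    EmbedsAt u w i ↔ 1 ≤ i ∧ i + u.length ≤ w.length + 1 ∧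
      ∀ q : ℤ, letter u q ≤ letter w (i + q - 1) := by
  refine and_congr_right fun _ => and_congr_right fun _ => ⟨fun h q => ?_, fun h j _ => h j⟩
  by_cases hq : q < 1 ∨ (u.length : ℤ) < q
  · simp [letter_eq_zero u hq]
  · obtain ⟨j, rfl⟩ : ∃ j : ℕ, q = j := ⟨q.toNat, by omega⟩
    exact h j (by simp; omega)

noncomputable def occurrences (u w : List ℕ) : Finset ℤ :=
  {i ∈ Icc (1 : ℤ) (w.length + 1 - u.length) | EmbedsAt u w i.toNat}

lemma mem_occurrences {u w : List ℕ} {i : ℤ} :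
    i ∈ occurrences u w ↔ 1 ≤ i ∧ i + u.length ≤ w.length + 1 ∧
      ∀ q : ℤ, letter u q ≤ letter w (i + q - 1) := by
  rw [occurrences, mem_filter, mem_Icc, embedsAt_iff]
  constructor
  · rintro ⟨⟨h1, -⟩, -, h2, h⟩
    exact ⟨h1, by omega, fun q => by simpa [show ((i.toNat : ℕ) : ℤ) = i by omega] using h q⟩
  · rintro ⟨h1, h2, h⟩
    exact ⟨⟨h1, by omega⟩, by omega, by omega,
      fun q => by simpa [show ((i.toNat : ℕ) : ℤ) = i by omega] using h q⟩

lemma card_occurrences (u w : List ℕ) : #(occurrences u w) = eta u w := by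
  refine card_nbij' (fun i => i.toNat) (fun i => (i : ℤ)) (fun i hi => ?_) (fun i hi => ?_)
    (fun i hi => ?_) (fun i _ => by simp)
  · simp only [occurrences, mem_coe, mem_filter, mem_Icc] at hi ⊢
    exact ⟨⟨by omega, by omega⟩, hi.2⟩
  · simp only [occurrences, mem_coe, mem_filter, mem_Icc] at hi ⊢
    exact ⟨⟨by omega, by omega⟩, by simpa using hi.2⟩
  · simp only [occurrences, mem_coe, mem_filter, mem_Icc] at hi
    simp only
    omega

noncomputable def demand (u : List ℕ) (T : Finset ℤ) (p : ℤ) : ℕ :=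
  max 1 (T.sup fun i => letter u (p - i + 1))

lemma one_le_demand (u : List ℕ) (T : Finset ℤ) (p : ℤ) : 1 ≤ demand u T p :=
  le_max_left _ _

lemma demand_le_iff {u : List ℕ} {T : Finset ℤ} {p : ℤ} {L : ℕ} :
    demand u T p ≤ L ↔ 1 ≤ L ∧ ∀ i ∈ T, letter u (p - i + 1) ≤ L := by
  rw [demand, max_le_iff, Finset.sup_le_iff]

lemma subset_occurrences_iff {u w : List ℕ} (hw : IsWord w) {T : Finset ℤ}
    (hT : T ⊆ Icc (1 : ℤ) (w.length + 1 - u.length)) :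
    T ⊆ occurrences u w ↔ ∀ p ∈ Icc (1 : ℤ) w.length, demand u T p ≤ letter w p := by
  simp only [demand_le_iff]
  constructor
  · intro h p hp
    rw [mem_Icc] at hp
    refine ⟨one_le_letter hw hp.1 hp.2, fun i hi => ?_⟩
    simpa [show i + (p - i + 1) - 1 = p by ring] using (mem_occurrences.mp (h hi)).2.2 (p - i + 1)
  · intro h i hi
    have hi' := mem_Icc.mp (hT hi)
    refine mem_occurrences.mpr ⟨hi'.1, by omega, fun q => ?_⟩
    by_cases hq : q < 1 ∨ (u.length : ℤ) < q
    · simp [letter_eq_zero u hq]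
    · simpa [show i + q - 1 - i + 1 = q by ring] using
        (h (i + q - 1) (mem_Icc.mpr (by omega))).2 i hi

noncomputable def etaPoly (u : List ℕ) (n m : ℕ) : ℤ[X] :=
  ∑ w ∈ words n m, X ^ eta u w

lemma coeff_etaPoly (u : List ℕ) (n m j : ℕ) :
    (etaPoly u n m).coeff j = #{w ∈ words n m | eta u w = j} := by
  simp only [etaPoly, finsetSum_coeff, coeff_X_pow, eq_comm (a := j), sum_boole]

lemma card_filter_subset_occurrences {u : List ℕ} {n m : ℕ} {T : Finset ℤ}
    (hT : T ⊆ Icc (1 : ℤ) (n + 1 - u.length)) :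
    #{w ∈ words n m | T ⊆ occurrences u w} = #(dominating n m (demand u T)) := by
  rw [dominating]
  congr 1
  refine filter_congr fun w hw => ?_
  obtain ⟨hword, rfl, -⟩ := mem_words.mp hw
  exact subset_occurrences_iff hword hT

/-- Marking occurrences: `∑_w (1 + X)^{η_u(w)}` counts words together with a set of marked
occurrences, and the words carrying a given marked set are those above its demand. -/
lemma taylor_etaPoly (u : List ℕ) (n m : ℕ) :
    taylor 1 (etaPoly u n m) = ∑ T ∈ (Icc (1 : ℤ) (n + 1 - u.length)).powerset,
      X ^ #T * (#(dominating n m (demand u T)) : ℤ[X]) := by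
  have marked (w : List ℕ) (hw : w ∈ words n m) : (X + C 1 : ℤ[X]) ^ eta u w =
      ∑ T ∈ (Icc (1 : ℤ) (n + 1 - u.length)).powerset,
        if T ⊆ occurrences u w then X ^ #T else 0 := by
    have hocc : occurrences u w ⊆ Icc (1 : ℤ) (n + 1 - u.length) := by
      rw [← (mem_words.mp hw).2.1]; exact filter_subset _ _
    rw [C_1, ← card_occurrences, ← sum_pow_mul_eq_add_pow, ← sum_filter]
    refine sum_congr (by ext T; simpa using fun h => h.trans hocc) fun T _ => ?_
    rw [one_pow, mul_one]
  simp only [etaPoly, map_sum, taylor_X_pow]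
  rw [sum_congr rfl marked, sum_comm]
  refine sum_congr rfl fun T hT => ?_
  rw [← sum_filter, sum_const, nsmul_eq_mul, mul_comm,
    card_filter_subset_occurrences (mem_powerset.mp hT)]

theorem stronglyWilfEquiv_of_sum_demand_eq {u v : List ℕ} (hlen : u.length = v.length)
    (h : ∀ n : ℕ, ∀ T ⊆ Icc (1 : ℤ) (n + 1 - u.length),
      ∑ p ∈ Icc (1 : ℤ) n, demand u T p = ∑ p ∈ Icc (1 : ℤ) n, demand v T p) :
    StronglyWilfEquiv u v := by
  intro n m j
  have hpoly : etaPoly u n m = etaPoly v n m := by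
    refine taylor_injective 1 ?_
    rw [taylor_etaPoly, taylor_etaPoly, ← hlen]
    refine sum_congr rfl fun T hT => ?_
    rw [card_dominating_congr (fun p _ => one_le_demand u T p) (fun p _ => one_le_demand v T p)
      (h n T (mem_powerset.mp hT))]
  rw [ncard_setOf_word_eq_card, ncard_setOf_word_eq_card]
  exact_mod_cast (coeff_etaPoly u n m j).symm.trans
    ((congrArg (coeff · j) hpoly).trans (coeff_etaPoly v n m j))

lemma mem_occurrences_reverse {u w : List ℕ} {i : ℤ} :
    i ∈ occurrences u.reverse w.reverse ↔
      (w.length + 2 - u.length - i) ∈ occurrences u w := by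
  simp only [mem_occurrences, List.length_reverse, letter_reverse, ← and_assoc]
  refine and_congr (by omega) ⟨fun h q => ?_, fun h q => ?_⟩
  · simpa [show (w.length : ℤ) + 1 - (i + (u.length + 1 - q) - 1) =
      w.length + 2 - u.length - i + q - 1 by ring] using h (u.length + 1 - q)
  · simpa [show (w.length : ℤ) + 2 - u.length - i + (u.length + 1 - q) - 1 =
      w.length + 1 - (i + q - 1) by ring] using h (u.length + 1 - q)

lemma eta_reverse (u w : List ℕ) : eta u.reverse w.reverse = eta u w := by
  rw [← card_occurrences, ← card_occurrences]
  refine card_nbij' (fun i => w.length + 2 - u.length - i) (fun i => w.length + 2 - u.length - i)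
    (fun i hi => mem_occurrences_reverse.mp hi) (fun i hi => ?_) (fun i _ => by simp)
    (fun i _ => by simp)
  rw [mem_coe, mem_occurrences_reverse, sub_sub_cancel]
  exact hi

lemma IsWord.reverse {w : List ℕ} (hw : IsWord w) : IsWord w.reverse :=
  fun x hx => hw x (List.mem_reverse.mp hx)

lemma mem_words_reverse {n m : ℕ} {w : List ℕ} (hw : w ∈ words n m) : w.reverse ∈ words n m := by
  obtain ⟨hword, hlen, hsum⟩ := mem_words.mp hw
  exact mem_words.mpr ⟨hword.reverse, by rw [List.length_reverse, hlen],
    by rw [List.sum_reverse, hsum]⟩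

theorem stronglyWilfEquiv_reverse (u : List ℕ) : StronglyWilfEquiv u u.reverse := by
  intro n m j
  rw [ncard_setOf_word_eq_card, ncard_setOf_word_eq_card]
  refine card_nbij' List.reverse List.reverse (fun w hw => ?_) (fun w hw => ?_)
    (fun w _ => List.reverse_reverse w) (fun w _ => List.reverse_reverse w)
  · rw [mem_coe, mem_filter] at hw ⊢
    exact ⟨mem_words_reverse hw.1, by rw [eta_reverse, hw.2]⟩
  · rw [mem_coe, mem_filter] at hw ⊢
    refine ⟨mem_words_reverse hw.1, ?_⟩
    rw [← hw.2, ← eta_reverse u.reverse w, List.reverse_reverse]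

theorem StronglyWilfEquiv.trans {u v w : List ℕ} (huv : StronglyWilfEquiv u v)
    (hvw : StronglyWilfEquiv v w) : StronglyWilfEquiv u w :=
  fun n m j => (huv n m j).trans (hvw n m j)

section ShiftCounts

variable (S : Finset ℤ) (t : ℤ)

lemma card_filter_sub_notMem_eq : #{i ∈ S | i - t ∉ S} = #{i ∈ S | i + t ∉ S} := by
  have hmem : #{i ∈ S | i - t ∈ S} = #{i ∈ S | i + t ∈ S} :=
    card_nbij' (· - t) (· + t) (fun i hi => by simp_all) (fun i hi => by simp_all)
      (fun i _ => by simp) (fun i _ => by simp)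
  have h₁ := card_filter_add_card_filter_not (s := S) (p := fun i => i - t ∈ S)
  have h₂ := card_filter_add_card_filter_not (s := S) (p := fun i => i + t ∈ S)
  omega

lemma card_filter_sub_mem_sub_notMem_eq :
    #{i ∈ S | i - t ∈ S ∧ i - 2 * t ∉ S} = #{i ∈ S | i + t ∈ S ∧ i + 2 * t ∉ S} := by
  set T := {i ∈ S | i - t ∈ S}
  have hleft : {i ∈ S | i - t ∈ S ∧ i - 2 * t ∉ S} = {i ∈ T | i - t ∉ T} := by
    ext i
    simp only [T, mem_filter, show i - t - t = i - 2 * t by ring]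
    tauto
  have hright : #{i ∈ S | i + t ∈ S ∧ i + 2 * t ∉ S} = #{i ∈ T | i + t ∉ T} := by
    refine card_nbij' (· + t) (· - t) (fun i hi => ?_) (fun i hi => ?_)
      (fun i _ => by simp) (fun i _ => by simp)
    · simp_all [T, show i + t + t = i + 2 * t by ring]
    · simp only [T, mem_coe, mem_filter, add_sub_cancel_right] at hi ⊢
      simp only [sub_add_cancel, show i - t + 2 * t = i + t by ring]
      tauto
  rw [hleft, hright, card_filter_sub_notMem_eq]

lemma card_filter_sub_notMem_sub_notMem_eq :
    #{i ∈ S | i - t ∉ S ∧ i - 2 * t ∉ S} = #{i ∈ S | i + t ∉ S ∧ i + 2 * t ∉ S} := by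
  have card_split (s : ℤ) :
      #{i ∈ S | i - 2 * s ∉ S} = #{i ∈ S | i - s ∈ S ∧ i - 2 * s ∉ S} +
        #{i ∈ S | i - s ∉ S ∧ i - 2 * s ∉ S} := by
    rw [← card_filter_add_card_filter_not (p := fun i => i - s ∈ S), filter_filter,
      filter_filter]
    congr 2 <;> ext i <;> simp [and_comm]
  have h₁ := card_split t
  have h₂ := card_split (-t)
  simp only [mul_neg, sub_neg_eq_add] at h₂
  have h₃ := card_filter_sub_notMem_eq S (2 * t)
  have h₄ := card_filter_sub_mem_sub_notMem_eq S t
  omega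

lemma sum_filter_sub_notMem_ite (β γ : ℕ) :
    ∑ i ∈ S with i - 2 * t ∉ S, (if i - t ∈ S then β else γ) =
      ∑ i ∈ S with i + 2 * t ∉ S, (if i + t ∈ S then β else γ) := by
  simp only [sum_ite, sum_const, smul_eq_mul, filter_filter]
  rw [filter_congr (p := fun i => i - 2 * t ∉ S ∧ i - t ∈ S) (fun _ _ => and_comm),
    filter_congr (p := fun i => i - 2 * t ∉ S ∧ i - t ∉ S) (fun _ _ => and_comm),
    filter_congr (p := fun i => i + 2 * t ∉ S ∧ i + t ∈ S) (fun _ _ => and_comm),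
    filter_congr (p := fun i => i + 2 * t ∉ S ∧ i + t ∉ S) (fun _ _ => and_comm),
    card_filter_sub_mem_sub_notMem_eq, card_filter_sub_notMem_sub_notMem_eq]

end ShiftCounts

lemma demand_five (a₀ a₁ a₂ a₃ a₄ : ℕ) (T : Finset ℤ) (p : ℤ) :
    demand [a₀, a₁, a₂, a₃, a₄] T p =
      max 1 (max (if p ∈ T then a₀ else 0) (max (if p - 1 ∈ T then a₁ else 0)
        (max (if p - 2 ∈ T then a₂ else 0) (max (if p - 3 ∈ T then a₃ else 0)
          (if p - 4 ∈ T then a₄ else 0))))) := by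
  unfold demand
  congr 1
  refine le_antisymm (Finset.sup_le fun i hi => ?_) ?_
  · by_cases hk : p - i + 1 < 1 ∨ (5 : ℤ) < p - i + 1
    · rw [letter_eq_zero _ (by simpa using hk)]
      exact Nat.zero_le _
    · obtain ⟨k, hk4, rfl⟩ : ∃ k : ℕ, k ≤ 4 ∧ i = p - k := ⟨(p - i).toNat, by omega, by omega⟩
      interval_cases k <;> simp_all [letter]
  · simp only [max_le_iff]
    refine ⟨?_, ?_, ?_, ?_, ?_⟩ <;> split_ifs with h
    all_goals first
      | exact Nat.zero_le _
      | refine le_trans (le_of_eq ?_) (le_sup h); simp [letter]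

/-- What `[A, _, b, _, C]` demands at a position reached by the end letter of exactly one
occurrence: the only positions where its demand can differ from that of `[C, _, b, _, A]`. -/
noncomputable def endDemand (A b C : ℕ) (T : Finset ℤ) (p : ℤ) : ℕ :=
  (if p ∈ T ∧ p - 4 ∉ T then (if p - 2 ∈ T then max 1 (max A b) else max 1 A) else 0) +
  (if p - 4 ∈ T ∧ p ∉ T then (if p - 2 ∈ T then max 1 (max C b) else max 1 C) else 0)

lemma demand_add_endDemand {A b C x y : ℕ} (hxA : x ≤ A) (hxb : x ≤ b) (hxC : x ≤ C)
    (hyA : y ≤ A) (hyb : y ≤ b) (hyC : y ≤ C) (T : Finset ℤ) (p : ℤ) :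
    demand [A, y, b, x, C] T p + endDemand C b A T p =
      demand [C, y, b, x, A] T p + endDemand A b C T p := by
  rw [demand_five, demand_five, endDemand, endDemand]
  by_cases h₀ : p ∈ T <;> by_cases h₁ : p - 1 ∈ T <;> by_cases h₂ : p - 2 ∈ T <;>
    by_cases h₃ : p - 3 ∈ T <;> by_cases h₄ : p - 4 ∈ T <;>
    simp only [h₀, h₁, h₂, h₃, h₄, if_true, if_false, not_true_eq_false, not_false_eq_true,
      and_true, and_false] <;> omega

lemma sum_endDemand (A b C : ℕ) {n : ℕ} {T : Finset ℤ} (hT : ∀ i ∈ T, 1 ≤ i ∧ i + 4 ≤ n) :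
    ∑ p ∈ Icc (1 : ℤ) n, endDemand A b C T p =
      ∑ i ∈ T with i - 4 ∉ T, (if i - 2 ∈ T then max 1 (max A b) else max 1 A) +
      ∑ i ∈ T with i + 4 ∉ T, (if i + 2 ∈ T then max 1 (max C b) else max 1 C) := by
  simp only [endDemand, sum_add_distrib, ← sum_filter]
  congr 1
  · refine sum_congr ?_ fun _ _ => rfl
    ext i
    simp only [mem_filter, mem_Icc]
    constructor
    · rintro ⟨-, hi, h⟩; exact ⟨hi, by simpa using h⟩
    · rintro ⟨hi, h⟩; exact ⟨by have := hT i hi; omega, hi, by simpa using h⟩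
  · refine sum_nbij' (· - 4) (· + 4) (fun p hp => ?_) (fun i hi => ?_) (fun p _ => by simp)
      (fun i _ => by simp) (fun p _ => by simp [show p - 4 + 2 = p - 2 by ring])
    · simp only [mem_filter, mem_Icc] at hp ⊢
      exact ⟨hp.2.1, by simpa using hp.2.2⟩
    · simp only [mem_filter, mem_Icc] at hi ⊢
      have := hT i hi.1
      exact ⟨⟨by omega, by omega⟩, by simpa using hi.1, by simpa using hi.2⟩

lemma sum_endDemand_comm (A b C : ℕ) {n : ℕ} {T : Finset ℤ}
    (hT : ∀ i ∈ T, 1 ≤ i ∧ i + 4 ≤ n) :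
    ∑ p ∈ Icc (1 : ℤ) n, endDemand A b C T p = ∑ p ∈ Icc (1 : ℤ) n, endDemand C b A T p := by
  have reflect (β γ : ℕ) := sum_filter_sub_notMem_ite T 2 β γ
  simp only [show (2 : ℤ) * 2 = 4 by norm_num] at reflect
  rw [sum_endDemand A b C hT, sum_endDemand C b A hT, reflect, reflect, add_comm]

theorem sum_demand_swap_ends {A b C x y : ℕ} (hxA : x ≤ A) (hxb : x ≤ b) (hxC : x ≤ C)
    (hyA : y ≤ A) (hyb : y ≤ b) (hyC : y ≤ C) {n : ℕ} {T : Finset ℤ}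
    (hT : ∀ i ∈ T, 1 ≤ i ∧ i + 4 ≤ n) :
    ∑ p ∈ Icc (1 : ℤ) n, demand [A, y, b, x, C] T p =
      ∑ p ∈ Icc (1 : ℤ) n, demand [C, y, b, x, A] T p := by
  have h := sum_congr rfl fun p (_ : p ∈ Icc (1 : ℤ) n) =>
    demand_add_endDemand hxA hxb hxC hyA hyb hyC T p
  rw [sum_add_distrib, sum_add_distrib, sum_endDemand_comm C b A hT] at h
  exact Nat.add_right_cancel h

theorem axbyc_stronglyWilfEquiv_aybxc_general (a b c x y : ℕ)
    (hxa : x ≤ a) (hxb : x ≤ b) (hxc : x ≤ c)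
    (hya : y ≤ a) (hyb : y ≤ b) (hyc : y ≤ c) :
    StronglyWilfEquiv [a, x, b, y, c] [a, y, b, x, c] := by
  refine StronglyWilfEquiv.trans (v := [c, x, b, y, a])
    (stronglyWilfEquiv_of_sum_demand_eq rfl fun n T hT => ?_) (stronglyWilfEquiv_reverse _)
  refine sum_demand_swap_ends hya hyb hyc hxa hxb hxc fun i hi => ?_
  have := mem_Icc.mp (hT hi)
  simp only [List.length_cons, List.length_nil] at this
  omega

/-- For positive `x, y` with `x, y ≤ a, b, c`, the words
`axbyc` and `aybxc` are strongly Wilf equivalent. -/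
theorem axbyc_stronglyWilfEquiv_aybxc (a b c x y : ℕ)
    (hx : 1 ≤ x) (hy : 1 ≤ y)
    (hxa : x ≤ a) (hxb : x ≤ b) (hxc : x ≤ c)
    (hya : y ≤ a) (hyb : y ≤ b) (hyc : y ≤ c) :
    StronglyWilfEquiv [a, x, b, y, c] [a, y, b, x, c] :=
  axbyc_stronglyWilfEquiv_aybxc_general a b c x y hxa hxb hxc hya hyb hyc
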